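/- Let k > s ≥ 3 be integers and let n be sufficiently large in terms of k. Let N be the least positive integer such that r_k(N) = ⌊n/s⌋. Then f_{s,k}(n) ≥ (n/(300·s·N))^{s−2} · n². -/

import Mathlib

/-!
Take a `k`-AP-free `B ⊆ [1, N]` with `|B| = ⌊n / s⌋`. Cut `[1, N]` into `s` intervals: by
Cauchy–Schwarz at least `|B|² / s` pairs `(b, b')` lie in a common interval, and then every point
`b + j (b' - b)`, `j < s`, is within `N` of `[1, N]`. For random shifts `c j ∈ [-2N, 2N]` a
fraction `(|B| / 4N) ^ (s - 2)` of these pairs has `b + j (b' - b) - c j ∈ B` for all `j`.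
The union of the translates `B + 13 j N + c j`, `j < s`, is `k`-AP-free because `k > s` forces a
`k`-term progression into a single translate, and each good pair gives the `s`-term progression
`b + j (13 N + b' - b)` in it. Fewer than `s` far-away points bring the size up to `n`.
-/

open Finset Pointwise

/-- The `k`-term arithmetic progression `{x, x+d, …, x+(k-1)d}` as a finite set. -/
def AP (k : ℕ) (x d : ℤ) : Finset ℤ := (Finset.range k).image (fun i : ℕ => x + (i : ℤ) * d)

/-- A set of integers is `k`-AP free if it contains no nontrivial `k`-term
arithmetic progression. -/
def APFree (k : ℕ) (A : Set ℤ) : Prop :=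
  ∀ x d : ℤ, d ≠ 0 → ¬ (↑(AP k x d) : Set ℤ) ⊆ A

/-- `fAP s A` is the number of nontrivial `s`-term arithmetic progressions contained
in the finite set `A`. -/
noncomputable def fAP (s : ℕ) (A : Finset ℤ) : ℕ :=
  Nat.card {P : Finset ℤ // P ⊆ A ∧ ∃ x d : ℤ, d ≠ 0 ∧ P = AP s x d}

/-- `fsk s k n` is the maximum number of nontrivial `s`-term arithmetic progressions
in a `k`-AP free set of `n` integers. -/
noncomputable def fsk (s k n : ℕ) : ℕ :=
  sSup {m | ∃ A : Finset ℤ, A.card = n ∧ APFree k ↑A ∧ fAP s A = m}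

/-- `rk k n` is the size of the largest `k`-AP free subset of `{1, …, n}`. -/
noncomputable def rk (k n : ℕ) : ℕ :=
  sSup {m | ∃ A : Finset ℤ, A ⊆ Finset.Icc 1 (n : ℤ) ∧ APFree k ↑A ∧ A.card = m}

/-- The partial sumset `A +_G B` along the edge set `E` of a bipartite graph. -/
def partialSumset (E : Finset (ℤ × ℤ)) : Finset ℤ := E.image (fun e => e.1 + e.2)

/-- `pathCount A B E a a'` is the number of (ordered) paths `(a, b, a'', b', a')` of
length four between `a` and `a'` in the bipartite graph with parts `A`, `B` and
edge set `E`. -/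
def pathCount (A B : Finset ℤ) (E : Finset (ℤ × ℤ)) (a a' : ℤ) : ℕ :=
  ((B ×ˢ A ×ˢ B).filter (fun t =>
    (a, t.1) ∈ E ∧ (t.2.1, t.1) ∈ E ∧ (t.2.1, t.2.2) ∈ E ∧ (a', t.2.2) ∈ E)).card

lemma mem_AP {k : ℕ} {x d y : ℤ} : y ∈ AP k x d ↔ ∃ i : ℕ, i < k ∧ y = x + i * d := by
  simp [AP, eq_comm]

lemma AP_reverse {k : ℕ} (hk : 0 < k) (x d : ℤ) : AP k (x + (k - 1) * d) (-d) = AP k x d := by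
  ext y
  simp only [mem_AP]
  constructor <;>
  · rintro ⟨i, hi, rfl⟩
    refine ⟨k - 1 - i, by omega, ?_⟩
    rw [Nat.cast_sub (by omega), Nat.cast_sub hk]
    ring

lemma card_AP (k : ℕ) (x : ℤ) {d : ℤ} (hd : d ≠ 0) : (AP k x d).card = k := by
  rw [AP, card_image_of_injective _ fun i j hij => ?_, card_range]
  exact_mod_cast mul_right_cancel₀ hd (add_left_cancel hij)

lemma AP_subset_Icc (k : ℕ) (x : ℤ) {d : ℤ} (hd : 0 ≤ d) :
    AP k x d ⊆ Icc x (x + (k - 1) * d) := by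
  intro y hy
  obtain ⟨i, hi, rfl⟩ := mem_AP.1 hy
  have : (i : ℤ) ≤ k - 1 := by omega
  exact mem_Icc.2 ⟨by nlinarith, by nlinarith⟩

lemma AP_injective {k : ℕ} (hk : 2 ≤ k) {x d x' d' : ℤ} (hd : 0 < d) (hd' : 0 < d')
    (h : AP k x d = AP k x' d') : x = x' ∧ d = d' := by
  have first (x d : ℤ) : x ∈ AP k x d := mem_AP.2 ⟨0, by omega, by simp⟩
  have last (x d : ℤ) : x + (k - 1) * d ∈ AP k x d :=
    mem_AP.2 ⟨k - 1, by omega, by rw [Nat.cast_sub (by omega)]; simp⟩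
  have h₁ := mem_Icc.1 (AP_subset_Icc k x hd.le (h ▸ first x' d'))
  have h₂ := mem_Icc.1 (AP_subset_Icc k x' hd'.le (h ▸ first x d))
  have h₃ := mem_Icc.1 (AP_subset_Icc k x hd.le (h ▸ last x' d'))
  have h₄ := mem_Icc.1 (AP_subset_Icc k x' hd'.le (h ▸ last x d))
  have hk' : (1 : ℤ) ≤ k - 1 := by omega
  refine ⟨by omega, ?_⟩
  nlinarith

lemma eq_of_abs_sub_mul_le {M D y y' : ℤ} {j j' : ℕ} (hy : |y - j * M| ≤ D)
    (hy' : |y' - j' * M| ≤ D) (h : |y - y'| + 2 * D < M) : j = j' := by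
  by_contra hne
  have hjj : (1 : ℤ) ≤ |(j : ℤ) - j'| := Int.one_le_abs (sub_ne_zero.2 (by exact_mod_cast hne))
  have : |((j : ℤ) - j') * M| ≤ |y - y'| + 2 * D := by
    have := abs_add_three (y - y') (j * M - y) (y' - j' * M)
    rw [abs_sub_comm (j * M : ℤ) y] at this
    calc |((j : ℤ) - j') * M| = |(y - y') + (j * M - y) + (y' - j' * M)| := by ring_nf
      _ ≤ |y - y'| + 2 * D := by linarith
  rw [abs_mul] at this
  nlinarith [abs_nonneg M, le_abs_self M, abs_nonneg (y - y')]

namespace APFree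

variable {k : ℕ}

lemma of_forall_pos {A : Set ℤ} (h : ∀ x d : ℤ, 0 < d → ¬ (↑(AP k x d) : Set ℤ) ⊆ A) :
    APFree k A := by
  intro x d hd hsub
  rcases hd.lt_or_gt with hneg | hpos
  · rcases Nat.eq_zero_or_pos k with rfl | hk
    · exact h 0 1 one_pos (by simp [AP])
    · exact h _ (-d) (neg_pos.2 hneg) (by rwa [AP_reverse hk])
  · exact h x d hpos hsub

lemma of_card_lt {A : Finset ℤ} (hA : A.card < k) : APFree k A := by
  intro x d hd hsub
  have := card_le_card (coe_subset.1 hsub)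
  rw [card_AP k x hd] at this
  omega

lemma image_add {A : Set ℤ} (hA : APFree k A) (t : ℤ) : APFree k ((· + t) '' A) := by
  intro x d hd hsub
  refine hA (x - t) d hd fun y hy => ?_
  obtain ⟨i, hi, rfl⟩ := mem_AP.1 hy
  obtain ⟨a, ha, hat⟩ := hsub (mem_AP.2 ⟨i, hi, rfl⟩)
  convert ha using 1
  linarith

/-- A progression with its first two terms in `A₁` has difference at most `2 W`, so it stays in
`A₁`; otherwise all its terms but the first lie in `A₂`. -/
lemma union_of_far {A₁ A₂ : Set ℤ} {W : ℤ} (h₁ : APFree (k + 1) A₁) (h₂ : APFree k A₂)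
    (hA₁ : ∀ a ∈ A₁, |a| ≤ W) (hA₂ : ∀ a ∈ A₂, (2 * k + 1) * W < a) :
    APFree (k + 1) (A₁ ∪ A₂) := by
  rcases Nat.eq_zero_or_pos k with rfl | hk
  · exact absurd h₂ fun h => h 0 1 one_ne_zero (by simp [AP])
  refine of_forall_pos fun x d hd hsub => ?_
  have mem (i : ℕ) (hi : i ≤ k) : x + i * d ∈ A₁ ∪ A₂ := hsub (mem_AP.2 ⟨i, by omega, rfl⟩)
  have not_mem₂ {a : ℤ} (ha : a ∈ A₁) (b : ℤ) (hb : b ≤ a) : b ∉ A₂ := fun hb₂ => by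
    have := abs_le.1 (hA₁ a ha)
    nlinarith [hA₂ b hb₂]
  have hx : x ∈ A₁ ∪ A₂ := by simpa using mem 0 (Nat.zero_le _)
  rcases (by simpa using mem 1 (by omega) : x + d ∈ A₁ ∪ A₂) with hx₁ | hx₂
  · replace hx : x ∈ A₁ := hx.resolve_right (not_mem₂ hx₁ x (by linarith))
    have hdW : d ≤ 2 * W := by
      have := abs_le.1 (hA₁ _ hx); have := abs_le.1 (hA₁ _ hx₁); linarith
    refine h₁ x d hd.ne' fun y hy => ?_
    obtain ⟨i, hi, rfl⟩ := mem_AP.1 hy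
    refine (mem i (by omega)).resolve_right fun hy₂ => ?_
    have := abs_le.1 (hA₁ _ hx)
    have : (i : ℤ) ≤ k := by omega
    nlinarith [hA₂ _ hy₂]
  · refine h₂ (x + d) d hd.ne' fun y hy => ?_
    obtain ⟨i, hi, rfl⟩ := mem_AP.1 hy
    have hy : x + d + i * d ∈ A₁ ∪ A₂ := by
      convert mem (i + 1) (by omega) using 1; push_cast; ring
    exact hy.resolve_left fun hy₁ => not_mem₂ hy₁ (x + d) (by nlinarith) hx₂

/-- By pigeonhole two terms share a block, so the difference is at most `2 D < M - 2 D` and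
consecutive terms never change block. -/
lemma biUnion_of_window {t : ℕ} (htk : t < k) {M D : ℤ} (hMD : 4 * D < M) {S : ℕ → Finset ℤ}
    (hS : ∀ j, APFree k (S j)) (hwin : ∀ j, ∀ y ∈ S j, |y - j * M| ≤ D) :
    APFree k ((range t).biUnion S) := by
  refine of_forall_pos fun x d hd hsub => ?_
  have hblock (i : ℕ) : ∃ j, i < k → j ∈ range t ∧ x + i * d ∈ S j := by
    by_cases hi : i < k
    · obtain ⟨j, hj, h⟩ := mem_biUnion.1 (hsub (mem_AP.2 ⟨i, hi, rfl⟩))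
      exact ⟨j, fun _ => ⟨hj, h⟩⟩
    · exact ⟨0, fun h => absurd h hi⟩
  choose L hL using hblock
  obtain ⟨i₁, hi₁, i₂, hi₂, hne, hL₁₂⟩ := exists_ne_map_eq_of_card_lt_of_maps_to
    (by simpa using htk) fun i hi => (hL i (mem_range.1 hi)).1
  have hdD : d ≤ 2 * D := by
    have h₁ := abs_le.1 (hwin _ _ (hL i₁ (mem_range.1 hi₁)).2)
    have h₂ := abs_le.1 (hwin _ _ (hL₁₂ ▸ (hL i₂ (mem_range.1 hi₂)).2))
    rcases Nat.lt_or_gt_of_ne hne with h | h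
    · have : (i₁ : ℤ) + 1 ≤ i₂ := by exact_mod_cast h
      nlinarith
    · have : (i₂ : ℤ) + 1 ≤ i₁ := by exact_mod_cast h
      nlinarith
  have hstep (i : ℕ) (hi : i + 1 < k) : L (i + 1) = L i := by
    refine eq_of_abs_sub_mul_le (hwin _ _ (hL _ hi).2) (hwin _ _ (hL i (by omega)).2) ?_
    rw [show x + ↑(i + 1) * d - (x + i * d) = d by push_cast; ring, abs_of_pos hd]
    linarith
  have hconst (i : ℕ) (hi : i < k) : L i = L 0 := by
    induction i with
    | zero => rfl
    | succ i ih => rw [hstep i hi, ih (by omega)]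
  refine hS (L 0) x d hd.ne' fun y hy => ?_
  obtain ⟨i, hi, rfl⟩ := mem_AP.1 hy
  exact hconst i hi ▸ (hL i hi).2

lemma exists_superset_card_eq {A : Finset ℤ} (hA : APFree k A) {n : ℕ} (hAn : A.card ≤ n)
    (hnk : n < A.card + (k - 1)) : ∃ A' : Finset ℤ, A ⊆ A' ∧ A'.card = n ∧ APFree k A' := by
  obtain ⟨k, rfl⟩ : ∃ k', k = k' + 1 := ⟨k - 1, by omega⟩
  set W := ∑ a ∈ A, |a|
  have hW (a : ℤ) (ha : a ∈ A) : |a| ≤ W := single_le_sum (fun _ _ => abs_nonneg _) ha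
  have hW₀ : 0 ≤ W := sum_nonneg fun _ _ => abs_nonneg _
  set T := (2 * k + 1) * W
  set pad := Ioc T (T + (n - A.card : ℕ))
  have hpad (a : ℤ) (ha : a ∈ pad) : T < a := (mem_Ioc.1 ha).1
  have hdisj : Disjoint A pad := disjoint_left.2 fun a ha ha' => by
    have : W ≤ T := le_mul_of_one_le_left hW₀ (by linarith)
    linarith [le_abs_self a, hW a ha, hpad a ha']
  refine ⟨A ∪ pad, subset_union_left, ?_, ?_⟩
  · rw [card_union_of_disjoint hdisj, Int.card_Ioc]
    omega
  · rw [coe_union]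
    refine union_of_far hA (of_card_lt ?_) hW hpad
    rw [Int.card_Ioc]
    omega

end APFree

open Classical in
lemma fAP_eq_card_filter (s : ℕ) (A : Finset ℤ) :
    fAP s A = (A.powerset.filter fun P => ∃ x d : ℤ, d ≠ 0 ∧ P = AP s x d).card := by
  rw [fAP, ← Nat.card_eq_finsetCard]
  exact Nat.card_congr (Equiv.subtypeEquivRight fun P => by simp)

lemma fAP_mono (s : ℕ) {A A' : Finset ℤ} (h : A ⊆ A') : fAP s A ≤ fAP s A' := by
  classical
  simp only [fAP_eq_card_filter]
  exact card_le_card (filter_subset_filter _ (powerset_mono.2 h))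

lemma fAP_le_two_pow (s : ℕ) (A : Finset ℤ) : fAP s A ≤ 2 ^ A.card := by
  classical
  rw [fAP_eq_card_filter, ← card_powerset]
  exact card_filter_le _ _

lemma card_le_fAP {ι : Type*} {s : ℕ} {S : Finset ι} {A : Finset ℤ} (x d : ι → ℤ)
    (hd : ∀ i ∈ S, d i ≠ 0) (hA : ∀ i ∈ S, AP s (x i) (d i) ⊆ A)
    (hinj : Set.InjOn (fun i => AP s (x i) (d i)) S) : S.card ≤ fAP s A := by
  classical
  rw [fAP_eq_card_filter]
  refine card_le_card_of_injOn _ (fun i hi => ?_) hinj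
  exact mem_filter.2 ⟨mem_powerset.2 (hA i hi), x i, d i, hd i hi, rfl⟩

lemma le_fsk {s k n : ℕ} {A : Finset ℤ} (hcard : A.card = n) (hfree : APFree k A) :
    fAP s A ≤ fsk s k n := by
  refine le_csSup ⟨2 ^ n, ?_⟩ ⟨A, hcard, hfree, rfl⟩
  rintro _ ⟨A', rfl, -, rfl⟩
  exact fAP_le_two_pow s A'

lemma exists_apFree_card_eq_rk {k : ℕ} (hk : 0 < k) (N : ℕ) :
    ∃ B : Finset ℤ, B ⊆ Icc 1 (N : ℤ) ∧ APFree k B ∧ B.card = rk k N := by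
  refine Nat.sSup_mem (s := {m | ∃ B : Finset ℤ, B ⊆ Icc 1 (N : ℤ) ∧ APFree k B ∧ B.card = m})
    ⟨0, ∅, empty_subset _, APFree.of_card_lt (by simpa), rfl⟩ ⟨N, ?_⟩
  rintro _ ⟨B, hB, -, rfl⟩
  simpa using card_le_card hB

lemma sq_card_le_card_mul_card_filter_eq {α β : Type*} [DecidableEq β] (B : Finset α)
    (T : Finset β) (f : α → β) (hf : ∀ b ∈ B, f b ∈ T) :
    B.card ^ 2 ≤ T.card * ((B ×ˢ B).filter fun p => f p.1 = f p.2).card := by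
  have hpairs : ((B ×ˢ B).filter fun p => f p.1 = f p.2).card =
      ∑ t ∈ T, (B.filter (f · = t)).card ^ 2 := by
    rw [card_eq_sum_card_fiberwise (f := fun p => f p.1) fun p hp =>
      hf _ (mem_product.1 (mem_filter.1 hp).1).1]
    refine sum_congr rfl fun t _ => ?_
    rw [sq, ← card_product]
    congr 1
    ext ⟨b, b'⟩
    simp only [mem_filter, mem_product]
    constructor
    · rintro ⟨⟨⟨hb, hb'⟩, h⟩, rfl⟩; exact ⟨⟨hb, rfl⟩, hb', h.symm⟩
    · rintro ⟨⟨hb, rfl⟩, hb', h⟩; exact ⟨⟨⟨hb, hb'⟩, h.symm⟩, rfl⟩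
  rw [hpairs, card_eq_sum_card_fiberwise hf]
  exact sq_sum_le_card_mul_sum_sq

lemma Int.abs_sub_lt_of_ediv_eq {a b N : ℤ} (hN : 0 < N) (h : a / N = b / N) : |a - b| < N := by
  have ha := Int.emod_add_mul_ediv a N
  have hb := Int.emod_add_mul_ediv b N
  have := Int.emod_nonneg a hN.ne'
  have := Int.emod_nonneg b hN.ne'
  have := Int.emod_lt_of_pos a hN
  have := Int.emod_lt_of_pos b hN
  rw [h] at ha
  rw [abs_sub_lt_iff]
  constructor <;> linarith

open Fintype in
/-- Averaging over all shift vectors `c ∈ C ^ ι`: for each `p` and `i`, exactly `#B` shifts `c i`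
put `v i p - c i` into `B`. -/
lemma exists_shifts_card_mul_pow_le {α ι G : Type*} [Fintype ι] [DecidableEq ι] [AddCommGroup G]
    [DecidableEq G] (P : Finset α) (B C : Finset G) (hC : C.Nonempty) (v : ι → α → G)
    (hv : ∀ p ∈ P, ∀ i, ∀ b ∈ B, v i p - b ∈ C) :
    ∃ c : ι → G, (∀ i, c i ∈ C) ∧
      P.card * B.card ^ card ι ≤
        C.card ^ card ι * (P.filter fun p => ∀ i, v i p - c i ∈ B).card := by
  have hgood (p : α) (hp : p ∈ P) :
      ((piFinset fun _ => C).filter fun c => ∀ i, v i p - c i ∈ B).card = B.card ^ card ι := by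
    have hfiber (i : ι) : C.filter (v i p - · ∈ B) = B.image (v i p - ·) := by
      ext x
      simp only [mem_filter, mem_image]
      constructor
      · rintro ⟨-, hx⟩; exact ⟨_, hx, sub_sub_cancel _ _⟩
      · rintro ⟨b, hb, rfl⟩; exact ⟨hv p hp i b hb, by rwa [sub_sub_cancel]⟩
    have : ((piFinset fun _ => C).filter fun c => ∀ i, v i p - c i ∈ B) =
        piFinset fun i => C.filter (v i p - · ∈ B) := by
      ext c; simp [forall_and]
    simp [this, hfiber, card_image_of_injective _ sub_right_injective]
  have hsum : ∑ c ∈ piFinset (fun _ => C), (P.filter fun p => ∀ i, v i p - c i ∈ B).card =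
      P.card * B.card ^ card ι := by
    simp_rw [card_filter]
    rw [sum_comm, ← smul_eq_mul, ← sum_const]
    refine sum_congr rfl fun p hp => ?_
    rw [← hgood p hp, card_filter]
  have hmean : ∑ _c ∈ piFinset (fun _ : ι => C), P.card * B.card ^ card ι =
      ∑ c ∈ piFinset (fun _ : ι => C),
        C.card ^ card ι * (P.filter fun p => ∀ i, v i p - c i ∈ B).card := by
    rw [sum_const, ← mul_sum, hsum, card_piFinset, prod_const, card_univ, smul_eq_mul]
  obtain ⟨c, hc, hle⟩ := exists_le_of_sum_le hC.piFinset_const hmean.le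
  exact ⟨c, mem_piFinset.1 hc, hle⟩

lemma exists_close_pairs {s N : ℕ} (hs : 0 < s) (hN : 0 < N) {B : Finset ℤ}
    (hB : B ⊆ Icc 1 (N : ℤ)) :
    ∃ P ⊆ B ×ˢ B, B.card ^ 2 ≤ s * P.card ∧ ∀ p ∈ P, s * |p.2 - p.1| < N := by
  have hN' : (0 : ℤ) < N := by exact_mod_cast hN
  have hidx (b : ℤ) (hb : b ∈ B) : (b - 1) * s / N ∈ Ico (0 : ℤ) s := by
    have := mem_Icc.1 (hB hb)
    have : (0 : ℤ) < s := by exact_mod_cast hs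
    exact mem_Ico.2
      ⟨Int.ediv_nonneg (by nlinarith) hN'.le, Int.ediv_lt_of_lt_mul hN' (by nlinarith)⟩
  refine ⟨_, filter_subset _ _, by simpa using sq_card_le_card_mul_card_filter_eq B _ _ hidx,
    fun p hp => ?_⟩
  have := Int.abs_sub_lt_of_ediv_eq hN' (mem_filter.1 hp).2
  rwa [← sub_mul, abs_mul, abs_sub_comm, Nat.abs_cast, sub_sub_sub_cancel_right, mul_comm] at this

lemma exists_shifts_good_pairs {s N : ℕ} (hs : 2 ≤ s) (hN : 0 < N) {B : Finset ℤ}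
    (hB : B ⊆ Icc 1 (N : ℤ)) :
    ∃ (c : ℕ → ℤ) (GP : Finset (ℤ × ℤ)), (∀ j, |c j| ≤ 2 * N) ∧ c 0 = 0 ∧ c 1 = 0 ∧
      (∀ p ∈ GP, ∀ j < s, p.1 + j * (p.2 - p.1) - c j ∈ B) ∧
      B.card ^ s ≤ s * (4 * N) ^ (s - 2) * GP.card := by
  have hBN (b : ℤ) (hb : b ∈ B) : 1 ≤ b ∧ b ≤ N := mem_Icc.1 (hB hb)
  obtain ⟨P, hPB, hP, hclose⟩ := exists_close_pairs (by omega : 0 < s) hN hB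
  set C := Icc (2 - 2 * (N : ℤ)) (2 * N - 2)
  have hv (p : ℤ × ℤ) (hp : p ∈ P) (j : Ico 2 s) (b : ℤ) (hb : b ∈ B) :
      p.1 + (j : ℕ) * (p.2 - p.1) - b ∈ C := by
    have hj : ((j : ℕ) : ℤ) < s := by exact_mod_cast (mem_Ico.1 j.2).2
    have hδ : |((j : ℕ) : ℤ) * (p.2 - p.1)| < N := by
      rw [abs_mul, Nat.abs_cast]
      exact lt_of_le_of_lt (mul_le_mul_of_nonneg_right hj.le (abs_nonneg _)) (hclose p hp)
    replace hδ := abs_lt.1 hδ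
    have h₁ := hBN b hb
    have h₂ := hBN _ (mem_product.1 (hPB hp)).1
    exact mem_Icc.2 ⟨by linarith, by linarith⟩
  obtain ⟨c, hcC, hcount⟩ := exists_shifts_card_mul_pow_le P B C ⟨0, mem_Icc.2 (by omega)⟩
    (fun (j : Ico 2 s) p => p.1 + (j : ℕ) * (p.2 - p.1)) hv
  simp only [Fintype.card_coe, Nat.card_Ico] at hcount
  set GP := P.filter fun p => ∀ j : Ico 2 s, p.1 + (j : ℕ) * (p.2 - p.1) - c j ∈ B
  refine ⟨fun j => if h : j ∈ Ico 2 s then c ⟨j, h⟩ else 0, GP, fun j => ?_, by simp, by simp,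
    fun p hp j hj => ?_, ?_⟩
  · dsimp only
    split_ifs with h
    · exact abs_le.2 (by have := mem_Icc.1 (hcC ⟨j, h⟩); constructor <;> linarith)
    · simp
  · obtain ⟨hpP, hgood⟩ := mem_filter.1 hp
    by_cases h : j ∈ Ico 2 s
    · simpa only [dif_pos h] using hgood ⟨j, h⟩
    · have hpB := mem_product.1 (hPB hpP)
      obtain rfl | rfl : j = 0 ∨ j = 1 := by simp only [mem_Ico] at h; omega
      · simpa using hpB.1
      · simpa using hpB.2
  · have hC : C.card ≤ 4 * N := by simp only [C, Int.card_Icc]; omega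
    calc B.card ^ s = B.card ^ 2 * B.card ^ (s - 2) := by rw [← pow_add]; congr; omega
      _ ≤ s * (P.card * B.card ^ (s - 2)) := by rw [← mul_assoc]; gcongr
      _ ≤ s * ((4 * N) ^ (s - 2) * GP.card) :=
        Nat.mul_le_mul_left _ (hcount.trans (by gcongr))
      _ = _ := by ring

lemma exists_apFree_card_le_fAP {k s N : ℕ} (hs : 2 ≤ s) (hsk : s < k) (hN : 0 < N)
    {B : Finset ℤ} (hB : B ⊆ Icc 1 (N : ℤ)) (hBfree : APFree k B) {c : ℕ → ℤ}
    (hc : ∀ j, |c j| ≤ 2 * N) (hc₀ : c 0 = 0) (hc₁ : c 1 = 0) {GP : Finset (ℤ × ℤ)}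
    (hGP : ∀ p ∈ GP, ∀ j < s, p.1 + j * (p.2 - p.1) - c j ∈ B) :
    ∃ A : Finset ℤ, A.card = s * B.card ∧ APFree k A ∧ GP.card ≤ fAP s A := by
  have hBN (b : ℤ) (hb : b ∈ B) : 1 ≤ b ∧ b ≤ N := mem_Icc.1 (hB hb)
  set M : ℤ := 13 * N
  set S : ℕ → Finset ℤ := fun j => B.image (· + (j * M + c j))
  have hwin (j : ℕ) (y : ℤ) (hy : y ∈ S j) : |y - j * M| ≤ 3 * N := by
    obtain ⟨b, hb, rfl⟩ := mem_image.1 hy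
    have := hBN b hb
    have := abs_le.1 (hc j)
    exact abs_le.2 ⟨by linarith, by linarith⟩
  have hN' : (0 : ℤ) < N := by exact_mod_cast hN
  refine ⟨(range s).biUnion S, ?_, APFree.biUnion_of_window hsk (by linarith) (fun j => ?_) hwin,
    ?_⟩
  · rw [card_biUnion fun j _ j' _ hne => disjoint_left.2 fun y hy hy' =>
      hne (eq_of_abs_sub_mul_le (hwin j y hy) (hwin j' y hy') (by simp; linarith))]
    simp only [S, card_image_of_injective _ (add_left_injective _), sum_const, card_range,
      smul_eq_mul]
  · simpa [S, coe_image] using hBfree.image_add (j * M + c j)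
  have hGPB (p : ℤ × ℤ) (hp : p ∈ GP) : p.1 ∈ B ∧ p.2 ∈ B :=
    ⟨by simpa [hc₀] using hGP p hp 0 (by omega), by simpa [hc₁] using hGP p hp 1 (by omega)⟩
  have hd (p : ℤ × ℤ) (hp : p ∈ GP) : 0 < M + (p.2 - p.1) := by
    have := hBN _ (hGPB p hp).1
    have := hBN _ (hGPB p hp).2
    linarith
  refine card_le_fAP Prod.fst (fun p => M + (p.2 - p.1)) (fun p hp => (hd p hp).ne')
    (fun p hp y hy => ?_) fun p hp q hq hpq => ?_
  · obtain ⟨j, hj, rfl⟩ := mem_AP.1 hy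
    exact mem_biUnion.2 ⟨j, mem_range.2 hj,
      mem_image.2 ⟨_, hGP p hp j hj, by ring⟩⟩
  · obtain ⟨h₁, h₂⟩ := AP_injective hs (hd p hp) (hd q hq) hpq
    exact Prod.ext h₁ (by linarith)

lemma mul_cube_le_seventyFour_pow {s : ℕ} (hs : 3 ≤ s) : 5625 * s ^ 3 ≤ 74 ^ s := by
  induction s, hs using Nat.le_induction with
  | base => norm_num
  | succ t ht ih =>
    calc 5625 * (t + 1) ^ 3 ≤ 5625 * (2 * t) ^ 3 := by gcongr; omega
      _ ≤ 74 * (5625 * t ^ 3) := by ring_nf; omega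
      _ ≤ 74 * 74 ^ t := Nat.mul_le_mul_left 74 ih
      _ = 74 ^ (t + 1) := (pow_succ' 74 t).symm

/-- `74 n ≤ 75 s ⌊n / s⌋` once `75 s ≤ n`, and `(75 / 74) ^ s` is absorbed by
`75 ^ (s - 2) / s ^ 3`. -/
lemma pow_le_mul_of_div_pow_le {s n N g : ℕ} (hs : 3 ≤ s) (hn : 75 * s ≤ n)
    (h : (n / s) ^ s ≤ s * (4 * N) ^ (s - 2) * g) : n ^ s ≤ (300 * s * N) ^ (s - 2) * g := by
  have hs₀ : 0 < s := by omega
  have h74 : 74 * n ≤ 75 * s * (n / s) := by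
    have := Nat.div_add_mod n s
    have := Nat.mod_lt n hs₀
    rw [mul_assoc]
    omega
  have hpow : (75 * s) ^ s = (75 * s) ^ (s - 2) * (75 * s) ^ 2 := by
    rw [← pow_add, Nat.sub_add_cancel (by omega)]
  have hmain : s * n ^ s ≤ (75 * s) ^ (s - 2) * (n / s) ^ s := by
    refine Nat.le_of_mul_le_mul_right ?_ (by positivity : 0 < (75 * s) ^ 2)
    calc s * n ^ s * (75 * s) ^ 2 = 5625 * s ^ 3 * n ^ s := by ring
      _ ≤ 74 ^ s * n ^ s := by gcongr; exact mul_cube_le_seventyFour_pow hs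
      _ ≤ (75 * s * (n / s)) ^ s := by rw [← mul_pow]; gcongr
      _ = (75 * s) ^ (s - 2) * (n / s) ^ s * (75 * s) ^ 2 := by rw [mul_pow, hpow]; ring
  refine Nat.le_of_mul_le_mul_left ?_ hs₀
  calc s * n ^ s ≤ (75 * s) ^ (s - 2) * (s * (4 * N) ^ (s - 2) * g) := hmain.trans (by gcongr)
    _ = s * ((300 * s * N) ^ (s - 2) * g) := by
      rw [show 300 * s * N = 75 * s * (4 * N) by ring, mul_pow (75 * s) (4 * N)]; ring

theorem fsk_lower_via_least_N (k s : ℕ) (hs : 3 ≤ s) (hk : s < k) :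
    ∃ n₀ : ℕ, ∀ n : ℕ, n₀ ≤ n → ∀ N : ℕ,
      IsLeast {N : ℕ | 0 < N ∧ rk k N = n / s} N →
      ((n : ℝ) / (300 * s * N)) ^ (s - 2) * (n : ℝ) ^ 2 ≤ (fsk s k n : ℝ) := by
  refine ⟨75 * s, fun n hn N ⟨⟨hN, hrk⟩, _⟩ => ?_⟩
  obtain ⟨B, hB, hBfree, hBcard⟩ := exists_apFree_card_eq_rk (k := k) (by omega) N
  rw [hrk] at hBcard
  obtain ⟨c, GP, hc, hc₀, hc₁, hGP, hcount⟩ := exists_shifts_good_pairs (s := s) (by omega) hN hB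
  obtain ⟨A₀, hA₀card, hA₀free, hA₀GP⟩ :=
    exists_apFree_card_le_fAP (by omega) hk hN hB hBfree hc hc₀ hc₁ hGP
  have hns : n < s * (n / s) + s := by
    simpa [mul_add_one] using Nat.lt_mul_div_succ n (b := s) (by omega)
  obtain ⟨A, hA₀A, hAcard, hAfree⟩ := hA₀free.exists_superset_card_eq (n := n)
    (by rw [hA₀card, hBcard]; exact Nat.mul_div_le n s) (by rw [hA₀card, hBcard]; omega)
  have hGPfsk : GP.card ≤ fsk s k n :=
    hA₀GP.trans ((fAP_mono s hA₀A).trans (le_fsk hAcard hAfree))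
  have hnat := pow_le_mul_of_div_pow_le hs hn
    (hBcard ▸ hcount.trans (Nat.mul_le_mul_left _ hGPfsk))
  rw [div_pow, div_mul_eq_mul_div, div_le_iff₀ (by positivity), ← pow_add,
    Nat.sub_add_cancel (by omega : 2 ≤ s), mul_comm]
  exact_mod_cast hnat
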